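/- Let p be a prime, m ≥ 1 and 1 ≤ s ≤ m integers, λ a positive integer with p ∣ λ, and π a permutation of {s, s+1, …, m}. Fix g_1, …, g_m, g ∈ ℤ_λ and an arbitrary function h : ℤ_p^{s−1} → ℤ_λ (with h = 0 when s = 1). Define f : ℤ_p^m → ℤ_λ by f(v_1, …, v_m) = (λ/p)·Σ_{i=s}^{m−1} v_{π(i)} v_{π(i+1)} + Σ_{i=1}^{m} g_i v_i + g + h(v_1, …, v_{s−1}) (mod λ), and for each γ ∈ ℤ_p define a^γ = f + (λ/p)·v_{π(s)}·γ (mod λ). Let i and j be integers in {0, …, p^m − 1} whose base-p digit vectors (i_1, …, i_m) and (j_1, …, j_m) satisfy i_{π(s)} ≠ j_{π(s)}. Then Σ_{γ=0}^{p−1} ω_λ^{a^γ(i_1,…,i_m) − a^γ(j_1,…,j_m)} = 0, where ω_λ = exp(2π√−1/λ). -/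

import Mathlib

open Finset

/-- `eZMod q x = ω_q^x` where `ω_q = exp(2π√-1/q)`. -/
noncomputable def eZMod (q : ℕ) (x : ZMod q) : ℂ :=
  Complex.exp (2 * (Real.pi : ℂ) * Complex.I * (x.val : ℂ) / (q : ℂ))

/-- Aperiodic autocorrelation of a sequence of length `L` at shift `τ`. -/
noncomputable def aacf (L : ℕ) (a : ℕ → ℂ) (τ : ℕ) : ℂ :=
  ∑ i ∈ Finset.range (L - τ), a i * (starRingEnd ℂ) (a (i + τ))

/-- `dig p i k` is the `k`-th base-`p` digit (1-indexed) of `i`, viewed in `ℤ_p`. -/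
def dig (p i : ℕ) (k : ℕ) : ZMod p :=
  (((i / p ^ (k - 1)) % p : ℕ) : ZMod p)

/-
Only the last term of `a^γ` depends on `γ`, so `a^γ(i) - a^γ(j) = C + γ D` with
`D = (λ/p)(i_{π(s)} - j_{π(s)})`. Since `p D = 0` in `ℤ_λ`, while `D ≠ 0` because
`0 < |i_{π(s)} - j_{π(s)}| < p`, the number `ω_λ^D` is a `p`-th root of unity other than `1`, and
the sum is `ω_λ^C` times a vanishing geometric sum.
-/

theorem geom_sum_eq_zero_of_pow_eq_one {R : Type*} [CommRing R] [IsDomain R] {x : R} {n : ℕ}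
    (hx : x ≠ 1) (hxn : x ^ n = 1) : ∑ k ∈ range n, x ^ k = 0 := by
  have hmul := geom_sum_mul x n
  rw [hxn, sub_self] at hmul
  exact (mul_eq_zero.mp hmul).resolve_right (sub_ne_zero.mpr hx)

theorem AddChar.sum_range_add_nsmul_eq_zero {A R : Type*} [AddMonoid A] [CommRing R] [IsDomain R]
    (ψ : AddChar A R) (c : A) {d : A} {n : ℕ} (hnd : n • d = 0) (hψd : ψ d ≠ 1) :
    ∑ k ∈ range n, ψ (c + k • d) = 0 := by
  simp only [AddChar.map_add_eq_mul, AddChar.map_nsmul_eq_pow, ← mul_sum]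
  rw [geom_sum_eq_zero_of_pow_eq_one hψd (by rw [← AddChar.map_nsmul_eq_pow, hnd,
    AddChar.map_zero_eq_one]), mul_zero]

theorem eZMod_eq_stdAddChar (q : ℕ) [NeZero q] (x : ZMod q) : eZMod q x = ZMod.stdAddChar x := by
  rw [ZMod.stdAddChar_apply, ZMod.toCircle_apply, eZMod]

theorem ZMod.natCast_div_mul_intCast_eq_zero_iff {p q : ℕ} (hpq : p ∣ q) (hq : q ≠ 0) (k : ℤ) :
    ((q / p : ℕ) : ZMod q) * (k : ZMod q) = 0 ↔ (p : ℤ) ∣ k := by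
  obtain ⟨r, rfl⟩ := hpq
  have hp : p ≠ 0 := left_ne_zero_of_mul hq
  have hr : (r : ℤ) ≠ 0 := by exact_mod_cast right_ne_zero_of_mul hq
  rw [Nat.mul_div_cancel_left r (Nat.pos_of_ne_zero hp), ← Int.cast_natCast, ← Int.cast_mul,
    ZMod.intCast_zmod_eq_zero_iff_dvd, Nat.cast_mul, mul_comm (p : ℤ),
    Int.mul_dvd_mul_iff_left hr]

theorem ZMod.natCast_div_mul_sub_val_ne_zero {p q : ℕ} (hpq : p ∣ q) (hq : q ≠ 0) {b c : ZMod p}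
    (hbc : b ≠ c) : ((q / p : ℕ) : ZMod q) * ((b.val : ZMod q) - (c.val : ZMod q)) ≠ 0 := by
  have : NeZero p := ⟨by rintro rfl; exact hq (zero_dvd_iff.mp hpq)⟩
  have hcast : (((b.val : ℤ) - c.val : ℤ) : ZMod p) = b - c := by simp
  rw [← sub_ne_zero, ← hcast, ne_eq, ZMod.intCast_zmod_eq_zero_iff_dvd,
    ← ZMod.natCast_div_mul_intCast_eq_zero_iff hpq hq] at hbc
  exact_mod_cast hbc

theorem ZMod.nsmul_natCast_div_mul {p q : ℕ} (hpq : p ∣ q) (x : ZMod q) :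
    p • (((q / p : ℕ) : ZMod q) * x) = 0 := by
  rw [nsmul_eq_mul, ← mul_assoc, ← Nat.cast_mul, Nat.mul_div_cancel' hpq, ZMod.natCast_self,
    zero_mul]

theorem stmt9_general (p s lam : ℕ)
    (hlam : 0 < lam) (hpl : p ∣ lam)
    (π : Equiv.Perm ℕ)
    (f : (ℕ → ZMod p) → ZMod lam)
    (a : ZMod p → (ℕ → ZMod p) → ZMod lam)
    (ha : ∀ (γ : ZMod p) (v : ℕ → ZMod p),
      a γ v = f v + ((lam / p : ℕ) : ZMod lam) * ((v (π s)).val : ZMod lam) * (γ.val : ZMod lam))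
    (i j : ℕ)
    (hne : dig p i (π s) ≠ dig p j (π s)) :
    ∑ γ ∈ Finset.range p,
      eZMod lam (a (γ : ZMod p) (dig p i) - a (γ : ZMod p) (dig p j)) = 0 := by
  have : NeZero lam := ⟨hlam.ne'⟩
  set D : ZMod lam := ((lam / p : ℕ) : ZMod lam) *
    (((dig p i (π s)).val : ZMod lam) - ((dig p j (π s)).val : ZMod lam))
  have hdiff : ∀ γ ∈ range p, a (γ : ZMod p) (dig p i) - a (γ : ZMod p) (dig p j) =
      (f (dig p i) - f (dig p j)) + γ • D := by
    intro γ hγ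
    rw [ha, ha, ZMod.val_natCast_of_lt (mem_range.mp hγ), nsmul_eq_mul]
    ring
  rw [sum_congr rfl fun γ hγ => by rw [hdiff γ hγ, eZMod_eq_stdAddChar]]
  refine AddChar.sum_range_add_nsmul_eq_zero _ _ (ZMod.nsmul_natCast_div_mul hpl _) ?_
  rw [ne_eq, ← AddChar.map_zero_eq_one (ZMod.stdAddChar (N := lam)),
    ZMod.injective_stdAddChar.eq_iff]
  exact ZMod.natCast_div_mul_sub_val_ne_zero hpl hlam.ne' hne

theorem stmt9 (p m s lam : ℕ) (hp : p.Prime) (hm : 1 ≤ m) (hs : 1 ≤ s) (hsm : s ≤ m)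
    (hlam : 0 < lam) (hpl : p ∣ lam)
    (π : Equiv.Perm ℕ) (hπ : ∀ i ∈ Finset.Icc s m, π i ∈ Finset.Icc s m)
    (g : ℕ → ZMod lam) (g₀ : ZMod lam)
    (h : (ℕ → ZMod p) → ZMod lam)
    (hdep : ∀ u w : ℕ → ZMod p, (∀ t, 1 ≤ t → t ≤ s - 1 → u t = w t) → h u = h w)
    (hs1 : s = 1 → ∀ u, h u = 0)
    (f : (ℕ → ZMod p) → ZMod lam)
    (hf : ∀ v : ℕ → ZMod p,
      f v = ((lam / p : ℕ) : ZMod lam) *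
            (∑ i ∈ Finset.Ico s m, ((v (π i)).val : ZMod lam) * ((v (π (i + 1))).val : ZMod lam))
        + ∑ i ∈ Finset.Icc 1 m, g i * ((v i).val : ZMod lam) + g₀ + h v)
    (a : ZMod p → (ℕ → ZMod p) → ZMod lam)
    (ha : ∀ (γ : ZMod p) (v : ℕ → ZMod p),
      a γ v = f v + ((lam / p : ℕ) : ZMod lam) * ((v (π s)).val : ZMod lam) * (γ.val : ZMod lam))
    (i j : ℕ) (hi : i < p ^ m) (hj : j < p ^ m)
    (hne : dig p i (π s) ≠ dig p j (π s)) :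
    ∑ γ ∈ Finset.range p,
      eZMod lam (a (γ : ZMod p) (dig p i) - a (γ : ZMod p) (dig p j)) = 0 :=
  stmt9_general p s lam hlam hpl π f a ha i j hne
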